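/- Let f be a multiplicative ℂ-linear map on m×m complex matrices with fⁿ = id. The equation X = A·f(X)·B + C has a solution if and only if the Stein equation 𝒳 = 𝒜·𝒳·ℬ + 𝒞 has a solution, where 𝒜 = A·f(A)⋯fⁿ⁻¹(A), ℬ = fⁿ⁻¹(B)⋯f(B)·B, and 𝒞 = Σ_{i=0}^{n-1} Gᵢ(C) with Gᵢ(X) = (A·f(A)⋯fⁱ⁻¹(A))·fⁱ(X)·(fⁱ⁻¹(B)⋯f(B)·B). -/

import Mathlib

/-
The map `T X = A * f X * B + C` is affine, its linear part `L X = A * f X * B` has iterates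
`Lⁱ = Gᵢ`, and `Gₙ X = 𝒜 * X * ℬ` because `fⁿ = id`. Hence `Tⁿ X = 𝒜 * X * ℬ + 𝒞`: the first
equation asks for a fixed point of `T`, the Stein equation for a point of period `n`. A fixed
point is periodic; conversely, `T` permutes the orbit of a periodic point cyclically and, being
affine, preserves centroids, so the centroid of the orbit is fixed. That centroid is the paper's
averaging operator `Fop` applied to the periodic point.
-/

open Finset

/-- Ordered product `A · f(A) · f²(A) ⋯ f^{i-1}(A)`. -/
noncomputable def prodA {m : ℕ} (f : Matrix (Fin m) (Fin m) ℂ → Matrix (Fin m) (Fin m) ℂ)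
    (A : Matrix (Fin m) (Fin m) ℂ) : ℕ → Matrix (Fin m) (Fin m) ℂ
  | 0 => 1
  | i + 1 => prodA f A i * f^[i] A

/-- Ordered product `f^{i-1}(B) ⋯ f(B) · B`. -/
noncomputable def prodB {m : ℕ} (f : Matrix (Fin m) (Fin m) ℂ → Matrix (Fin m) (Fin m) ℂ)
    (B : Matrix (Fin m) (Fin m) ℂ) : ℕ → Matrix (Fin m) (Fin m) ℂ
  | 0 => 1
  | i + 1 => f^[i] B * prodB f B i

/-- `Gᵢ(X) = (A·f(A)⋯f^{i-1}(A)) · fⁱ(X) · (f^{i-1}(B)⋯f(B)·B)`. -/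
noncomputable def G {m : ℕ} (f : Matrix (Fin m) (Fin m) ℂ → Matrix (Fin m) (Fin m) ℂ)
    (A B : Matrix (Fin m) (Fin m) ℂ) (i : ℕ) (X : Matrix (Fin m) (Fin m) ℂ) :
    Matrix (Fin m) (Fin m) ℂ :=
  prodA f A i * f^[i] X * prodB f B i

/-- The averaging operator `F(𝒳) = (1/n)·Σ_{i<n} (Gᵢ(𝒳) + (n−i−1)·Gᵢ(C))`. -/
noncomputable def Fop {m : ℕ} (f : Matrix (Fin m) (Fin m) ℂ → Matrix (Fin m) (Fin m) ℂ)
    (A B C : Matrix (Fin m) (Fin m) ℂ) (n : ℕ) (𝒳 : Matrix (Fin m) (Fin m) ℂ) :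
    Matrix (Fin m) (Fin m) ℂ :=
  ((n : ℂ)⁻¹) • ∑ i ∈ range n, (G f A B i 𝒳 + ((n - i - 1 : ℕ) : ℂ) • G f A B i C)

open Function

theorem Function.IsPeriodicPt.isFixedPt_centroid {k V P : Type*} [DivisionRing k] [CharZero k]
    [AddCommGroup V] [Module k V] [AddTorsor V P] {T : P →ᵃ[k] P} {n : ℕ} {x : P}
    (hx : IsPeriodicPt T n x) (hn : 0 < n) :
    IsFixedPt T ((univ : Finset (Fin n)).centroid k fun j => T^[j] x) := by
  have : NeZero n := ⟨hn.ne'⟩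
  have hrotate : T ∘ (fun j : Fin n => T^[j] x) = (fun j : Fin n => T^[j] x) ∘ finRotate n := by
    funext j
    rw [comp_apply, comp_apply, ← iterate_succ_apply' T, finRotate_apply, Fin.val_add,
      hx.iterate_mod_apply, Fin.val_one', ← hx.iterate_mod_apply (j + 1 % n), Nat.add_mod_mod,
      hx.iterate_mod_apply]
  have hw : ∑ j, (univ : Finset (Fin n)).centroidWeights k j = 1 :=
    sum_centroidWeights_eq_one_of_card_ne_zero k _ (by simp [hn.ne'])
  rw [IsFixedPt, centroid_def, map_affineCombination _ _ _ hw, hrotate, ← centroid_def,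
    ← Equiv.coe_toEmbedding, ← centroid_map, map_univ_equiv, centroid_def]

theorem AffineMap.exists_isFixedPt_iff_exists_isPeriodicPt {k V P : Type*} [DivisionRing k]
    [CharZero k] [AddCommGroup V] [Module k V] [AddTorsor V P] (T : P →ᵃ[k] P) {n : ℕ}
    (hn : 0 < n) : (∃ x, IsFixedPt T x) ↔ ∃ x, IsPeriodicPt T n x :=
  ⟨fun ⟨x, hx⟩ => ⟨x, hx.isPeriodicPt n⟩, fun ⟨_, hx⟩ => ⟨_, hx.isFixedPt_centroid hn⟩⟩

theorem Module.End.iterate_add_const_apply {R V : Type*} [Semiring R] [AddCommMonoid V]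
    [Module R V] (L : Module.End R V) (c : V) (j : ℕ) (x : V) :
    (fun y => L y + c)^[j] x = (L ^ j) x + ∑ i ∈ range j, (L ^ i) c := by
  induction j with
  | zero => simp
  | succ j ih =>
    simp only [iterate_succ_apply', ih, map_add, map_sum, sum_range_succ', pow_succ',
      Module.End.mul_apply, pow_zero, Module.End.one_apply, add_assoc]

theorem map_one_of_iterate_eq_id {M : Type*} [MulOneClass M] {f : M → M}
    (hmul : ∀ x y, f (x * y) = f x * f y) {n : ℕ} (hn : 0 < n) (hper : f^[n] = id) : f 1 = 1 := by
  obtain ⟨u, hu⟩ : ∃ u, f u = 1 := ⟨f^[n - 1] 1, by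
    rw [← iterate_succ_apply' f, Nat.succ_eq_add_one, Nat.sub_add_cancel hn, hper, id]⟩
  calc f 1 = f 1 * f u := by rw [hu, mul_one]
    _ = 1 := by rw [← hmul, one_mul, hu]

section TwistedProducts

variable {m : ℕ} {f : Matrix (Fin m) (Fin m) ℂ → Matrix (Fin m) (Fin m) ℂ}
  {A B : Matrix (Fin m) (Fin m) ℂ}

theorem mul_map_prodA (hmul : ∀ X Y, f (X * Y) = f X * f Y) (hone : f 1 = 1) (i : ℕ) :
    A * f (prodA f A i) = prodA f A (i + 1) := by
  induction i with
  | zero => simp [prodA, hone]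
  | succ i ih => rw [prodA, hmul, ← Matrix.mul_assoc, ih, ← iterate_succ_apply' f]; rfl

theorem map_prodB_mul (hmul : ∀ X Y, f (X * Y) = f X * f Y) (hone : f 1 = 1) (i : ℕ) :
    f (prodB f B i) * B = prodB f B (i + 1) := by
  induction i with
  | zero => simp [prodB, hone]
  | succ i ih => rw [prodB, hmul, Matrix.mul_assoc, ih, ← iterate_succ_apply' f]; rfl

theorem G_succ (hmul : ∀ X Y, f (X * Y) = f X * f Y) (hone : f 1 = 1) (i : ℕ)
    (X : Matrix (Fin m) (Fin m) ℂ) : G f A B (i + 1) X = A * f (G f A B i X) * B := by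
  rw [G, G, hmul, hmul, ← mul_map_prodA hmul hone, ← map_prodB_mul hmul hone,
    iterate_succ_apply']
  noncomm_ring

theorem G_eq_iterate (hmul : ∀ X Y, f (X * Y) = f X * f Y) (hone : f 1 = 1) (i : ℕ)
    (X : Matrix (Fin m) (Fin m) ℂ) : G f A B i X = (fun Y => A * f Y * B)^[i] X := by
  induction i with
  | zero => simp [G, prodA, prodB]
  | succ i ih => rw [G_succ hmul hone, ih, iterate_succ_apply']

end TwistedProducts

theorem stmt_9 {m n : ℕ} (hn : 0 < n)
    (f : Matrix (Fin m) (Fin m) ℂ → Matrix (Fin m) (Fin m) ℂ)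
    (hlin : IsLinearMap ℂ f) (hmul : ∀ X Y, f (X * Y) = f X * f Y)
    (hper : f^[n] = id)
    (A B C : Matrix (Fin m) (Fin m) ℂ) :
    (∃ X : Matrix (Fin m) (Fin m) ℂ, X = A * f X * B + C) ↔
      (∃ 𝒳 : Matrix (Fin m) (Fin m) ℂ,
        𝒳 = prodA f A n * 𝒳 * prodB f B n + ∑ i ∈ range n, G f A B i C) := by
  let L : Module.End ℂ (Matrix (Fin m) (Fin m) ℂ) :=
    LinearMap.mulRight ℂ B ∘ₗ LinearMap.mulLeft ℂ A ∘ₗ IsLinearMap.mk' f hlin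
  let T : Matrix (Fin m) (Fin m) ℂ →ᵃ[ℂ] Matrix (Fin m) (Fin m) ℂ :=
    L.toAffineMap + AffineMap.const ℂ _ C
  have hone : f 1 = 1 := map_one_of_iterate_eq_id hmul hn hper
  have hL (i : ℕ) (X : Matrix (Fin m) (Fin m) ℂ) : (L ^ i) X = G f A B i X := by
    rw [Module.End.pow_apply, G_eq_iterate hmul hone]
    rfl
  have hT (X : Matrix (Fin m) (Fin m) ℂ) :
      T^[n] X = prodA f A n * X * prodB f B n + ∑ i ∈ range n, G f A B i C := by
    rw [show ⇑T = fun Y => L Y + C from rfl, Module.End.iterate_add_const_apply]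
    simp only [hL, G, hper, id]
  have hfixed (X : Matrix (Fin m) (Fin m) ℂ) : X = A * f X * B + C ↔ IsFixedPt T X := eq_comm
  have hperiodic (X : Matrix (Fin m) (Fin m) ℂ) :
      X = prodA f A n * X * prodB f B n + ∑ i ∈ range n, G f A B i C ↔ IsPeriodicPt T n X := by
    rw [IsPeriodicPt, IsFixedPt, hT, eq_comm]
  simp only [hfixed, hperiodic]
  exact T.exists_isFixedPt_iff_exists_isPeriodicPt hn
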